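/- Non-symmetry of implication in C: for distinct propositional variables p and q, the sequent ⇒ (p → q) → (q → p) is not derivable in G3C. -/

import Mathlib

/-- Formulas of the connexive logic C: propositional variables, strong
negation `∼`, conjunction, disjunction and implication. -/
inductive Formula : Type
  | var : Nat → Formula
  | snot : Formula → Formula
  | and : Formula → Formula → Formula
  | or : Formula → Formula → Formula
  | imp : Formula → Formula → Formula
deriving DecidableEq
/-- Derivability of sequents `Γ ⇒ A` (with `Γ` a finite multiset of formulas)
in the sequent calculus `G3C` for the connexive logic `C`. -/
inductive Gder : Multiset Formula → Formula → Prop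
  | ax {Γ n} : Gder (.var n ::ₘ Γ) (.var n)
  | axSnot {Γ n} : Gder (.snot (.var n) ::ₘ Γ) (.snot (.var n))
  | andR {Γ A B} : Gder Γ A → Gder Γ B → Gder Γ (.and A B)
  | andL {Γ A B C} : Gder (A ::ₘ B ::ₘ Γ) C → Gder (.and A B ::ₘ Γ) C
  | orR₁ {Γ A B} : Gder Γ A → Gder Γ (.or A B)
  | orR₂ {Γ A B} : Gder Γ B → Gder Γ (.or A B)
  | orL {Γ A B C} : Gder (A ::ₘ Γ) C → Gder (B ::ₘ Γ) C → Gder (.or A B ::ₘ Γ) C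
  | impR {Γ A B} : Gder (A ::ₘ Γ) B → Gder Γ (.imp A B)
  | impL {Γ A B C} : Gder (.imp A B ::ₘ Γ) A → Gder (B ::ₘ Γ) C → Gder (.imp A B ::ₘ Γ) C
  | snotSnotR {Γ A} : Gder Γ A → Gder Γ (.snot (.snot A))
  | snotSnotL {Γ A C} : Gder (A ::ₘ Γ) C → Gder (.snot (.snot A) ::ₘ Γ) C
  | snotAndR₁ {Γ A B} : Gder Γ (.snot A) → Gder Γ (.snot (.and A B))
  | snotAndR₂ {Γ A B} : Gder Γ (.snot B) → Gder Γ (.snot (.and A B))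
  | snotAndL {Γ A B C} : Gder (.snot A ::ₘ Γ) C → Gder (.snot B ::ₘ Γ) C →
      Gder (.snot (.and A B) ::ₘ Γ) C
  | snotOrR {Γ A B} : Gder Γ (.snot A) → Gder Γ (.snot B) → Gder Γ (.snot (.or A B))
  | snotOrL {Γ A B C} : Gder (.snot A ::ₘ .snot B ::ₘ Γ) C → Gder (.snot (.or A B) ::ₘ Γ) C
  | snotImpR {Γ A B} : Gder (A ::ₘ Γ) (.snot B) → Gder Γ (.snot (.imp A B))
  | snotImpL {Γ A B C} : Gder (.snot (.imp A B) ::ₘ Γ) A → Gder (.snot B ::ₘ Γ) C →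
      Gder (.snot (.imp A B) ::ₘ Γ) C

/-! Every rule of G3C preserves truth in all bivaluations, where a formula's truth and the truth of
its strong negation are computed separately and `∼(A → B)` is read as `A → ∼B`. Making `q` the only
true variable (and every `∼r` false) validates `p → q` and `q` but not `p`, so
`(p → q) → (q → p)` is not even valid. -/

namespace Formula

/-- Truth of a formula when `v n` is the truth of the variable `n` and `w n` that of `∼n`. -/
def Holds (v w : Nat → Prop) : Formula → Prop
  | var n => v n
  | and A B => A.Holds v w ∧ B.Holds v w
  | or A B => A.Holds v w ∨ B.Holds v w
  | imp A B => A.Holds v w → B.Holds v w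
  | snot (var n) => w n
  | snot (snot A) => A.Holds v w
  | snot (and A B) => (snot A).Holds v w ∨ (snot B).Holds v w
  | snot (or A B) => (snot A).Holds v w ∧ (snot B).Holds v w
  | snot (imp A B) => A.Holds v w → (snot B).Holds v w

end Formula

theorem Gder.holds {Γ : Multiset Formula} {C : Formula} (h : Gder Γ C) (v w : Nat → Prop)
    (hΓ : ∀ A ∈ Γ, A.Holds v w) : C.Holds v w := by
  induction h <;> simp_all only [Formula.Holds, Multiset.forall_mem_cons] <;> tauto

/-- Non-symmetry of implication in `C`: for distinct propositional variables
`p` and `q`, the sequent `⇒ (p → q) → (q → p)` is not derivable in `G3C`. -/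
theorem C_nonsymmetry_of_implication (p q : Nat) (hpq : p ≠ q) :
    ¬ Gder 0 (.imp (.imp (.var p) (.var q)) (.imp (.var q) (.var p))) := by
  intro h
  have := h.holds (· = q) (fun _ => False) (by simp)
  simp [Formula.Holds, hpq] at this
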